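/- arXiv:1611.09585 — 2 statements merged into one kernel-verified Lean document; each statement's English description precedes it below -/
import Mathlib

section
/- Let G be a finite group acting linearly on a finite-dimensional complex vector space V such that the induced action on Sym^m V is trivial for some m > 0. Then every element of G acts on V by a scalar (homothety). -/
/- STATEMENT 1: Let G be a finite group acting linearly on a finite-dimensional complex
vector space V such that the induced action on Sym^m V is trivial for some m > 0.
Then every element of G acts on V by a scalar (homothety).  Sym^m V is realised as the
quotient of the m-th tensor power by the symmetry relations. -/


open TensorProduct PiTensorProduct

noncomputable def symRel (m : ℕ) (V : Type*) [AddCommGroup V] [Module ℂ V] :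
    Submodule ℂ (⨂[ℂ]^m V) :=
  Submodule.span ℂ {x | ∃ (v : Fin m → V) (σ : Equiv.Perm (Fin m)),
    x = (⨂ₜ[ℂ] i, v i) - ⨂ₜ[ℂ] i, v (σ i)}

noncomputable abbrev SymPow (m : ℕ) (V : Type*) [AddCommGroup V] [Module ℂ V] :=
  (⨂[ℂ]^m V) ⧸ symRel m V

noncomputable def symMap (m : ℕ) {V : Type*} [AddCommGroup V] [Module ℂ V]
    (f : V →ₗ[ℂ] V) : SymPow m V →ₗ[ℂ] SymPow m V :=
  Submodule.mapQ _ _ (PiTensorProduct.map fun _ => f) (by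
    conv_lhs => rw [symRel]
    rw [Submodule.span_le]
    rintro x ⟨v, σ, rfl⟩
    simp only [SetLike.mem_coe, Submodule.mem_comap, map_sub, PiTensorProduct.map_tprod]
    exact Submodule.subset_span ⟨fun i => f (v i), σ, rfl⟩)

/-! For a linear functional `c` on `V`, the map `v₁ ⋯ vₘ ↦ c v₁ ⋯ c vₘ` descends to `Sym^m V`,
so if `g` acts trivially on `Sym^m V` then `c (g v) ^ m = c v ^ m`. As `m > 0`, every functional
vanishing at `v` vanishes at `g v`, hence `g v` is a multiple of `v`. An endomorphism for which
every vector is an eigenvector is a homothety. -/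

section Collinear

variable {K V : Type*} [Field K] [AddCommGroup V] [Module K V]

theorem Submodule.mem_span_singleton_of_forall_dual_apply_eq_zero {v w : V}
    (h : ∀ c : Module.Dual K V, c v = 0 → c w = 0) : w ∈ K ∙ v :=
  (Subspace.forall_mem_dualAnnihilator_apply_eq_zero_iff _ w).mp fun c hc =>
    h c ((Submodule.mem_dualAnnihilator c).mp hc v (Submodule.mem_span_singleton_self v))

theorem LinearMap.exists_eq_smul_id_of_forall_apply_mem_span_singleton {f : V →ₗ[K] V}
    (h : ∀ v, f v ∈ K ∙ v) : ∃ a : K, f = a • 1 := by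
  refine LinearMap.exists_eq_smul_id_of_forall_notLinearIndependent fun v hli => ?_
  obtain ⟨a, ha⟩ := Submodule.mem_span_singleton.mp (h v)
  exact neg_ne_zero.mpr one_ne_zero
    (LinearIndependent.pair_iff.mp hli a (-1) (by rw [← ha, neg_one_smul, add_neg_cancel])).2

end Collinear

section SymPow

variable {V : Type*} [AddCommGroup V] [Module ℂ V] {m : ℕ}

noncomputable def symProdDual (m : ℕ) (c : Module.Dual ℂ V) : Module.Dual ℂ (SymPow m V) :=
  (symRel m V).liftQ (lift ((MultilinearMap.mkPiAlgebra ℂ (Fin m) ℂ).compLinearMap fun _ => c)) (by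
    rw [symRel, Submodule.span_le]
    rintro x ⟨u, σ, rfl⟩
    simp only [SetLike.mem_coe, LinearMap.mem_ker, map_sub, lift.tprod,
      MultilinearMap.compLinearMap_apply, MultilinearMap.mkPiAlgebra_apply, sub_eq_zero]
    exact (Equiv.prod_comp σ fun i => c (u i)).symm)

theorem symProdDual_mk_tprod (c : Module.Dual ℂ V) (v : Fin m → V) :
    symProdDual m c (Submodule.Quotient.mk (⨂ₜ[ℂ] i, v i)) = ∏ i, c (v i) := by
  simp [symProdDual]

theorem symMap_mk_tprod (f : V →ₗ[ℂ] V) (v : Fin m → V) :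
    symMap m f (Submodule.Quotient.mk (⨂ₜ[ℂ] i, v i)) =
      Submodule.Quotient.mk (⨂ₜ[ℂ] i, f (v i)) := by
  rw [symMap, Submodule.mapQ_apply, PiTensorProduct.map_tprod]

theorem pow_dual_apply_eq_of_symMap_eq_id {f : V →ₗ[ℂ] V} (hf : symMap m f = LinearMap.id)
    (c : Module.Dual ℂ V) (v : V) : c (f v) ^ m = c v ^ m := by
  have := congrArg (symProdDual m c) (symMap_mk_tprod f fun _ => v)
  simpa [hf, symProdDual_mk_tprod] using this.symm

end SymPow

theorem finite_group_trivial_on_sym_pow_acts_by_scalars_general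
    (G : Type*) [Group G]
    (V : Type*) [AddCommGroup V] [Module ℂ V]
    (ρ : Representation ℂ G V)
    (m : ℕ) (hm : 0 < m)
    (htriv : ∀ g : G, symMap m (ρ g) = LinearMap.id) :
    ∀ g : G, ∃ lam : ℂ, ∀ v : V, ρ g v = lam • v := by
  intro g
  have hcollinear : ∀ v, ρ g v ∈ ℂ ∙ v := fun v =>
    Submodule.mem_span_singleton_of_forall_dual_apply_eq_zero fun c hc => by
      simpa [hc, hm.ne'] using pow_dual_apply_eq_of_symMap_eq_id (htriv g) c v
  obtain ⟨lam, hlam⟩ := LinearMap.exists_eq_smul_id_of_forall_apply_mem_span_singleton hcollinear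
  exact ⟨lam, fun v => by simp [hlam]⟩

theorem finite_group_trivial_on_sym_pow_acts_by_scalars
    (G : Type*) [Group G] [Finite G]
    (V : Type*) [AddCommGroup V] [Module ℂ V] [FiniteDimensional ℂ V]
    (ρ : Representation ℂ G V)
    (m : ℕ) (hm : 0 < m)
    (htriv : ∀ g : G, symMap m (ρ g) = LinearMap.id) :
    ∀ g : G, ∃ lam : ℂ, ∀ v : V, ρ g v = lam • v :=
  finite_group_trivial_on_sym_pow_acts_by_scalars_general G V ρ m hm htriv
end

section
/- Let C be a smooth projective curve of genus g ≥ 1 and L a nontrivial line bundle on C with L⊗L ≅ O_C. Set E = O_C ⊕ L. Then for every m > 0 the symmetric power Sym^m E is not globally generated at any point of C; in particular the stable base locus 𝔹(E) equals C, so E is not strongly semiample. -/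
/-! Under `Sym^m (O_C ⊕ L) = ⊕_{i=0}^m L^{⊗i}`, the coefficient of `y₀^{m-1} y₁` of every
global section is a section of `L`, hence zero (`L.sec 1 = ⊥`) because a nontrivial line
bundle of degree zero has no sections. So at every point the values of global sections lie in
the hyperplane `{coeff_{y₀^{m-1} y₁} = 0}` of the fibre, which misses the monomial
`y₀^{m-1} y₁`. -/

open MvPolynomial

/-- The fibre of `Sym^m E` for a rank `r` bundle: homogeneous polynomials of degree `m`
in `r` variables (the `m`-th symmetric power of `ℂ^r`). -/
noncomputable abbrev Fib (r m : ℕ) : Submodule ℂ (MvPolynomial (Fin r) ℂ) :=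
  MvPolynomial.homogeneousSubmodule (Fin r) ℂ m

/-- Global sections of the trivial line bundle `O_C` on a connected projective variety `C`. -/
noncomputable def constSec (C : Type*) : Submodule ℂ (C → ℂ) :=
  Submodule.span ℂ {(fun _ => (1 : ℂ))}

/-- A model of a line bundle `L` on a curve `C`, presented in a trivialisation: for each
`k : ℤ`, `sec k` is the space of global sections of `L^{⊗k}` (as scalar functions);
products of sections of `L^{⊗a}` and `L^{⊗b}` are sections of `L^{⊗(a+b)}`. -/
structure LineBundleModel (C : Type*) where
  sec : ℤ → Submodule ℂ (C → ℂ)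
  mul_mem : ∀ {a b : ℤ} {s t : C → ℂ}, s ∈ sec a → t ∈ sec b → (s * t) ∈ sec (a + b)

/-- Global sections of `Sym^m (O_C ⊕ L)` for `E = O_C ⊕ L`: using
`Sym^m (O_C ⊕ L) = ⊕_{i=0}^m L^{⊗i}`, a section is a function into the fibre
(a degree-`m` homogeneous polynomial in two variables `y₀, y₁`) whose coefficient of
`y₀^{m-i} y₁^i` is a global section of `L^{⊗i}`. -/
def secE {C : Type*} (L : LineBundleModel C) (m : ℕ) : Set (C → Fib 2 m) :=
  {s | ∀ i : ℕ, i ≤ m →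
    (fun x => MvPolynomial.coeff
        (Finsupp.single (0 : Fin 2) (m - i) + Finsupp.single (1 : Fin 2) i)
        ((s x : Fib 2 m) : MvPolynomial (Fin 2) ℂ)) ∈ L.sec (i : ℤ)}

/-- `Sym^m E` is generated by global sections at the point `x`. -/
def genAt {C : Type*} (L : LineBundleModel C) (m : ℕ) (x : C) : Prop :=
  Submodule.span ℂ {v : Fib 2 m | ∃ s ∈ secE L m, s x = v} = ⊤

lemma monomial_mem_fib {m i : ℕ} (hi : i ≤ m) :
    monomial (Finsupp.single (0 : Fin 2) (m - i) + Finsupp.single 1 i) (1 : ℂ) ∈ Fib 2 m :=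
  (mem_homogeneousSubmodule _ _).mpr <| isHomogeneous_monomial _ <| by
    rw [map_add, Finsupp.degree_single, Finsupp.degree_single, Nat.sub_add_cancel hi]

lemma span_values_secE_le_ker_coeff {C : Type*} {L : LineBundleModel C} {m i : ℕ}
    (hi : i ≤ m) (hL : L.sec i = ⊥) (x : C) :
    Submodule.span ℂ {v : Fib 2 m | ∃ s ∈ secE L m, s x = v} ≤ LinearMap.ker
      ((lcoeff ℂ (Finsupp.single (0 : Fin 2) (m - i) + Finsupp.single 1 i)).comp
        (Fib 2 m).subtype) := by
  refine Submodule.span_le.mpr ?_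
  rintro _ ⟨s, hs, rfl⟩
  have hcoeff := hs i hi
  rw [hL, Submodule.mem_bot] at hcoeff
  exact congrFun hcoeff x

theorem not_genAt_of_sec_eq_bot {C : Type*} {L : LineBundleModel C} {m i : ℕ}
    (hi : i ≤ m) (hL : L.sec i = ⊥) (x : C) : ¬ genAt L m x := by
  intro hgen
  have hmem := span_values_secE_le_ker_coeff hi hL x (hgen ▸ Submodule.mem_top :
    (⟨_, monomial_mem_fib hi⟩ : Fib 2 m) ∈ _)
  simp [LinearMap.mem_ker, coeff_monomial] at hmem

theorem symPow_of_O_plus_torsion_nowhere_generated_general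
    (C : Type*) (L : LineBundleModel C)
    (hnontriv : L.sec 1 = ⊥) :
    (∀ m : ℕ, 0 < m → ∀ x : C, ¬ genAt L m x) ∧
      (⋂ m ∈ {m : ℕ | 0 < m}, {x : C | ¬ genAt L m x}) = Set.univ := by
  have nowhere : ∀ m : ℕ, 0 < m → ∀ x : C, ¬ genAt L m x := fun m hm =>
    not_genAt_of_sec_eq_bot (i := 1) hm (mod_cast hnontriv)
  exact ⟨nowhere, Set.eq_univ_of_forall fun x => Set.mem_iInter₂.mpr fun m hm => nowhere m hm x⟩

theorem symPow_of_O_plus_torsion_nowhere_generated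
    (C : Type*) (L : LineBundleModel C)
    (htors : ∀ k : ℤ, L.sec (k + 2) = L.sec k)
    (htriv : L.sec 0 = constSec C)
    (hnontriv : L.sec 1 = ⊥) :
    (∀ m : ℕ, 0 < m → ∀ x : C, ¬ genAt L m x) ∧
      (⋂ m ∈ {m : ℕ | 0 < m}, {x : C | ¬ genAt L m x}) = Set.univ :=
  symPow_of_O_plus_torsion_nowhere_generated_general C L hnontriv
end
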